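/- arXiv:1705.06898 — 2 statements merged into one kernel-verified Lean document; each statement's English description precedes it below -/
import Mathlib

section
/- Let u : [0, T) × M → (0, ∞) be a C² solution of ∂_t(u^N) = ((n+2)/4)(c_n Δu − R₀ u + f u^N) on a compact Riemannian manifold (M, g₀) without boundary, where N = (n+2)/(n-2), n ≥ 3, R₀ < 0 everywhere and f is smooth with max_M |f| > 0. Then for all (t,x), u(t,x) ≥ min( (min_M |R₀| / max_M |f|)^{(n-2)/4}, min_M u(0,·) ). -/
open Real Set Filter

/- We model the compact Riemannian manifold `(M, g₀)` of dimension `n` as the flat torus: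
functions on `EuclideanSpace ℝ (Fin n)` that are periodic with respect to the integer
lattice; `lap` is the Laplace–Beltrami operator (the Euclidean Laplacian). -/

/-- The Laplace–Beltrami operator of the flat metric. -/
noncomputable def lap {n : ℕ} (φ : EuclideanSpace ℝ (Fin n) → ℝ)
    (x : EuclideanSpace ℝ (Fin n)) : ℝ :=
  ∑ i : Fin n, fderiv ℝ (fun y => fderiv ℝ φ y (EuclideanSpace.single i 1)) x
    (EuclideanSpace.single i 1)

/-- Functions on the torus = lattice-periodic functions on `ℝⁿ`. -/
def IsPeriodic {n : ℕ} (φ : EuclideanSpace ℝ (Fin n) → ℝ) : Prop :=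
  ∀ x i, φ (x + EuclideanSpace.single i 1) = φ x

section Aux

open Topology

lemma per_int {n : ℕ} {φ : EuclideanSpace ℝ (Fin n) → ℝ} (hφ : IsPeriodic φ)
    (x : EuclideanSpace ℝ (Fin n)) (i : Fin n) (z : ℤ) :
    φ (x + (z : ℝ) • EuclideanSpace.single i 1) = φ x := by
  induction z using Int.induction_on with
  | zero => simp
  | succ k ih =>
      have h : (((k : ℤ) + 1 : ℤ) : ℝ) • EuclideanSpace.single i (1:ℝ) =
          ((k : ℤ) : ℝ) • EuclideanSpace.single i 1 + EuclideanSpace.single i 1 := by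
        push_cast; rw [add_smul, one_smul]
      rw [h, ← add_assoc, hφ _ i, ih]
  | pred k ih =>
      have h : x + ((-(k : ℤ) - 1 : ℤ) : ℝ) • EuclideanSpace.single i 1 +
          EuclideanSpace.single i 1 = x + ((-(k : ℤ) : ℤ) : ℝ) • EuclideanSpace.single i 1 := by
        push_cast
        module
      calc φ (x + ((-(k:ℤ) - 1 : ℤ) : ℝ) • EuclideanSpace.single i 1)
          = φ (x + ((-(k:ℤ) - 1 : ℤ) : ℝ) • EuclideanSpace.single i 1 +
              EuclideanSpace.single i 1) := (hφ _ i).symm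
        _ = φ (x + ((-(k:ℤ) : ℤ) : ℝ) • EuclideanSpace.single i 1) := by rw [h]
        _ = φ x := ih

lemma per_sum {n : ℕ} {φ : EuclideanSpace ℝ (Fin n) → ℝ} (hφ : IsPeriodic φ)
    (z : Fin n → ℤ) : ∀ x, φ (x + ∑ i, ((z i : ℝ) • EuclideanSpace.single i 1)) = φ x := by
  classical
  suffices H : ∀ s : Finset (Fin n), ∀ x,
      φ (x + ∑ i ∈ s, ((z i : ℝ) • EuclideanSpace.single i 1)) = φ x from H Finset.univ
  intro s
  induction s using Finset.induction_on with
  | empty => intro x; simp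
  | insert _ _ hni ih =>
      intro x
      rename_i a s'
      rw [Finset.sum_insert hni, ← add_assoc, ih (x + _), per_int hφ]

lemma per_reduce {n : ℕ} {φ : EuclideanSpace ℝ (Fin n) → ℝ} (hφ : IsPeriodic φ)
    (x : EuclideanSpace ℝ (Fin n)) :
    ∃ y : EuclideanSpace ℝ (Fin n), (∀ i, y i ∈ Icc (0:ℝ) 1) ∧ φ y = φ x := by
  set y : EuclideanSpace ℝ (Fin n) :=
    x + ∑ i, (((-⌊x i⌋ : ℤ) : ℝ) • EuclideanSpace.single i 1) with hy
  refine ⟨y, ?_, per_sum hφ _ x⟩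
  intro j
  have hcoord : y j = x j - ⌊x j⌋ := by
    have hs : (∑ i, (((-⌊x i⌋ : ℤ) : ℝ) • EuclideanSpace.single i (1:ℝ))) j
        = ∑ i, (((-⌊x i⌋ : ℤ) : ℝ) * (EuclideanSpace.single i (1:ℝ)) j) := by
      rw [WithLp.ofLp_sum, Finset.sum_apply j Finset.univ _]
      rfl
    have : y j = x j + (∑ i, (((-⌊x i⌋ : ℤ) : ℝ) • EuclideanSpace.single i (1:ℝ))) j := rfl
    rw [this, hs]
    simp only [EuclideanSpace.single_apply, mul_ite, mul_one, mul_zero, Int.cast_neg,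
      Finset.sum_ite_eq', Finset.sum_ite_eq, Finset.mem_univ, if_true]
    ring
  rw [hcoord]
  constructor
  · linarith [Int.floor_le (x j)]
  · linarith [Int.lt_floor_add_one (x j)]

lemma second_deriv_nonneg {g g' : ℝ → ℝ} (hg : ∀ s, HasDerivAt g (g' s) s) {c : ℝ}
    (hg' : HasDerivAt g' c 0) (hmin : ∀ s, g 0 ≤ g s) : 0 ≤ c := by
  by_contra h
  push_neg at h
  have h0 : g' 0 = 0 :=
    IsLocalMin.hasDerivAt_eq_zero (Filter.Eventually.of_forall hmin) (hg 0)
  have hslope := hasDerivAt_iff_tendsto_slope.mp hg'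
  have h2 : ∀ᶠ s in 𝓝[≠] (0:ℝ), slope g' 0 s < 0 := hslope.eventually_lt_const h
  have h3 : ∀ᶠ s in 𝓝[>] (0:ℝ), g' s < 0 := by
    have h2' : ∀ᶠ s in 𝓝[>] (0:ℝ), slope g' 0 s < 0 :=
      h2.filter_mono (nhdsWithin_mono 0 (fun s hs => ne_of_gt hs))
    filter_upwards [h2', self_mem_nhdsWithin] with s hs hs'
    have hss : g' s / s < 0 := by simpa [slope_def_field, h0] using hs
    rcases div_neg_iff.mp hss with ⟨_, hb⟩ | ⟨ha, _⟩
    · exact absurd hs' (not_lt.mpr hb.le)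
    · exact ha
  obtain ⟨δ, hδ, hδsub⟩ := mem_nhdsGT_iff_exists_Ioo_subset.mp h3
  have hanti : StrictAntiOn g (Icc 0 δ) := by
    apply strictAntiOn_of_deriv_neg (convex_Icc 0 δ)
    · exact fun s _ => (hg s).continuousAt.continuousWithinAt
    · intro s hs
      rw [interior_Icc] at hs
      rw [(hg s).deriv]
      exact hδsub hs
  have hlt : g δ < g 0 := hanti ⟨le_refl 0, (mem_Ioi.mp hδ).le⟩ ⟨(mem_Ioi.mp hδ).le, le_refl δ⟩ hδ
  exact absurd (hmin δ) (not_le.mpr hlt)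

lemma exists_lt_of_hasDerivAt_pos {g : ℝ → ℝ} {d t₀ : ℝ} (ht₀ : 0 < t₀)
    (hg : HasDerivAt g d t₀) (hd : 0 < d) : ∃ t, 0 < t ∧ t < t₀ ∧ g t < g t₀ := by
  have hslope := hasDerivAt_iff_tendsto_slope.mp hg
  have h2 : ∀ᶠ t in 𝓝[≠] t₀, 0 < slope g t₀ t := hslope.eventually_const_lt hd
  have h2' : ∀ᶠ t in 𝓝[<] t₀, 0 < slope g t₀ t :=
    h2.filter_mono (nhdsWithin_mono t₀ (fun s hs => ne_of_lt hs))
  have h3 : ∀ᶠ t in 𝓝[<] t₀, 0 < t := eventually_nhdsWithin_of_eventually_nhds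
    (Filter.tendsto_id.eventually_const_lt ht₀)
  obtain ⟨t, ⟨hts, htpos⟩, htlt⟩ := ((h2'.and h3).and self_mem_nhdsWithin).exists
  refine ⟨t, htpos, htlt, ?_⟩
  have hdenneg : t - t₀ < 0 := by linarith [htlt]
  have : 0 < (g t - g t₀) / (t - t₀) := by simpa [slope_def_field] using hts
  rcases div_pos_iff.mp this with ⟨_, hb⟩ | ⟨ha, _⟩
  · linarith
  · linarith

lemma lap_nonneg_of_min {n : ℕ} {φ : EuclideanSpace ℝ (Fin n) → ℝ} (hφ : ContDiff ℝ 2 φ)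
    {x₀ : EuclideanSpace ℝ (Fin n)} (hmin : ∀ x, φ x₀ ≤ φ x) : 0 ≤ lap φ x₀ := by
  unfold lap
  apply Finset.sum_nonneg
  intro i _
  set v : EuclideanSpace ℝ (Fin n) := EuclideanSpace.single i 1 with hv
  have hdφ : Differentiable ℝ φ := hφ.differentiable (by norm_num)
  have hline : ∀ s : ℝ, HasDerivAt (fun s : ℝ => x₀ + s • v) v s := by
    intro s
    simpa using ((hasDerivAt_id s).smul_const v).const_add x₀
  have hg : ∀ s : ℝ, HasDerivAt (fun s : ℝ => φ (x₀ + s • v))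
      (fderiv ℝ φ (x₀ + s • v) v) s := by
    intro s
    exact (hdφ (x₀ + s • v)).hasFDerivAt.comp_hasDerivAt s (hline s)
  have h1 : ContDiff ℝ 1 (fderiv ℝ φ) := hφ.fderiv_right (by norm_num)
  have hF1 : ∀ y, DifferentiableAt ℝ (fun y => fderiv ℝ φ y v) y := fun y =>
    ((h1.differentiable one_ne_zero) y).clm_apply (differentiableAt_const v)
  have hzero : x₀ + (0:ℝ) • v = x₀ := by simp
  have hg1 : HasDerivAt (fun s : ℝ => fderiv ℝ φ (x₀ + s • v) v)
      (fderiv ℝ (fun y => fderiv ℝ φ y v) x₀ v) 0 := by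
    have hfd : HasFDerivAt (fun y => fderiv ℝ φ y v)
        (fderiv ℝ (fun y => fderiv ℝ φ y v) x₀) (x₀ + (0:ℝ) • v) := by
      rw [hzero]; exact (hF1 x₀).hasFDerivAt
    exact hfd.comp_hasDerivAt (0:ℝ) (hline 0)
  have hmin' : ∀ s : ℝ, φ (x₀ + (0:ℝ) • v) ≤ φ (x₀ + s • v) := by
    intro s; rw [hzero]; exact hmin _
  exact second_deriv_nonneg hg hg1 hmin'

lemma isCompact_box {n : ℕ} :
    IsCompact {y : EuclideanSpace ℝ (Fin n) | ∀ i, y i ∈ Icc (0:ℝ) 1} := by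
  have h1 : IsCompact (Set.univ.pi fun _ : Fin n => Icc (0:ℝ) 1) :=
    isCompact_univ_pi fun _ => isCompact_Icc
  have h2 := h1.image (EuclideanSpace.equiv (Fin n) ℝ).symm.continuous
  convert h2 using 1
  ext y
  constructor
  · intro hy; exact ⟨y, fun i _ => hy i, rfl⟩
  · rintro ⟨z, hz, rfl⟩ i; exact hz i (mem_univ i)

end Aux

set_option maxHeartbeats 1000000 in
/-- Lower bound of Proposition 2.1: for a positive solution `u` of
`∂ₜ(u^N) = ((n+2)/4)(cₙΔu − R₀u + f u^N)` on `[0,T) × M` with `R₀ < 0`,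
`u(t,x) ≥ min((min|R₀|/max|f|)^{(n-2)/4}, min u(0,·))`. -/
theorem stmt_6 {n : ℕ} (hn : 3 ≤ n) (T : ℝ) (hT : 0 < T)
    (u : ℝ → EuclideanSpace ℝ (Fin n) → ℝ)
    (R₀ f : EuclideanSpace ℝ (Fin n) → ℝ)
    (N cn : ℝ) (hN : N = ((n : ℝ) + 2) / ((n : ℝ) - 2))
    (hcn : cn = 4 * ((n : ℝ) - 1) / ((n : ℝ) - 2))
    (hR₀smooth : ContDiff ℝ (⊤ : ℕ∞) R₀) (hfsmooth : ContDiff ℝ (⊤ : ℕ∞) f)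
    (hR₀per : IsPeriodic R₀) (hfper : IsPeriodic f)
    (hR₀neg : ∀ x, R₀ x < 0)
    (hfpos : 0 < sSup (Set.range fun y => |f y|))
    (hupos : ∀ t ∈ Ico 0 T, ∀ x, 0 < u t x)
    (huper : ∀ t ∈ Ico 0 T, IsPeriodic (u t))
    (hu2 : ∀ t ∈ Ico 0 T, ContDiff ℝ 2 (u t))
    (hucont : ContinuousOn (fun q : ℝ × EuclideanSpace ℝ (Fin n) => u q.1 q.2)
      (Ico 0 T ×ˢ univ))
    (hflow : ∀ t ∈ Ico 0 T, ∀ x,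
      HasDerivAt (fun s => u s x ^ N)
        (((n : ℝ) + 2) / 4 * (cn * lap (u t) x - R₀ x * u t x + f x * u t x ^ N)) t) :
    ∀ t ∈ Ico 0 T, ∀ x,
      min ((sInf (Set.range fun y => |R₀ y|) / sSup (Set.range fun y => |f y|))
            ^ (((n : ℝ) - 2) / 4))
        (sInf (Set.range (u 0))) ≤ u t x := by
  set S := sSup (Set.range fun y => |f y|) with hSdef
  set I := sInf (Set.range fun y => |R₀ y|) with hIdef
  set A := (I / S) ^ (((n:ℝ) - 2)/4) with hAdef
  set B := sInf (Set.range (u 0)) with hBdef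
  by_contra hcon
  push_neg at hcon
  obtain ⟨t₁, ht₁, x₁, hx₁⟩ := hcon
  have hn3 : (3:ℝ) ≤ (n:ℝ) := by exact_mod_cast hn
  have hn2pos : (0:ℝ) < (n:ℝ) - 2 := by linarith
  set m := u t₁ x₁ with hmdef
  have hmpos : 0 < m := hupos t₁ ht₁ x₁
  have hmA : m < A := lt_of_lt_of_le hx₁ (min_le_left _ _)
  have hmB : m < B := lt_of_lt_of_le hx₁ (min_le_right _ _)
  set K := {y : EuclideanSpace ℝ (Fin n) | ∀ i, y i ∈ Icc (0:ℝ) 1} with hKdef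
  have hK : IsCompact K := isCompact_box
  have hred : ∀ {φ : EuclideanSpace ℝ (Fin n) → ℝ}, IsPeriodic φ → ∀ x,
      ∃ y ∈ K, φ y = φ x := by
    intro φ hper x
    obtain ⟨y, hy, h⟩ := per_reduce hper x
    exact ⟨y, hy, h⟩
  set clamp : ℝ → ℝ := fun τ => max 0 (min τ t₁) with hclampdef
  have hclamp_mem : ∀ τ, clamp τ ∈ Ico 0 T := by
    intro τ
    refine ⟨le_max_left _ _, max_lt hT (lt_of_le_of_lt (min_le_right τ t₁) ht₁.2)⟩
  have hclamp_cont : Continuous clamp :=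
    continuous_const.max ((continuous_id.min continuous_const))
  have hclamp_id : ∀ τ, 0 ≤ τ → τ ≤ t₁ → clamp τ = τ := by
    intro τ h0 h1
    simp only [hclampdef]
    rw [min_eq_left h1, max_eq_right h0]
  set F : ℝ × EuclideanSpace ℝ (Fin n) → ℝ := fun p => u (clamp p.1) p.2 with hFdef
  have hFcont : Continuous F := by
    rw [← continuousOn_univ]
    have hFe : F = (fun q : ℝ × EuclideanSpace ℝ (Fin n) => u q.1 q.2) ∘
        (fun p => (clamp p.1, p.2)) := rfl
    rw [hFe]
    exact hucont.comp ((hclamp_cont.comp continuous_fst).prodMk continuous_snd).continuousOn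
      (fun p _ => ⟨hclamp_mem p.1, mem_univ _⟩)
  set C := (Icc 0 t₁ ×ˢ K) ∩ F ⁻¹' (Iic m) with hCdef
  have hCcomp : IsCompact C := (isCompact_Icc.prod hK).inter_right (isClosed_Iic.preimage hFcont)
  have ht₁0 : 0 ≤ t₁ := ht₁.1
  have hCne : C.Nonempty := by
    obtain ⟨y, hyK, hy⟩ := hred (huper t₁ ht₁) x₁
    refine ⟨(t₁, y), ⟨⟨ht₁0, le_refl t₁⟩, hyK⟩, ?_⟩
    show F (t₁, y) ≤ m
    have : F (t₁, y) = u t₁ y := by rw [hFdef]; simp only; rw [hclamp_id t₁ ht₁0 (le_refl t₁)]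
    rw [this, hy]
  set E := Prod.fst '' C with hEdef
  have hEcomp : IsCompact E := hCcomp.image continuous_fst
  have ht₀E : sInf E ∈ E := hEcomp.sInf_mem (hCne.image _)
  obtain ⟨⟨t₀', x₀'⟩, ⟨⟨ht₀'Icc, hx₀'K⟩, hFle⟩, ht₀'eq⟩ := ht₀E
  simp only at ht₀'eq hFle ht₀'Icc hx₀'K
  have ht₀T : t₀' < T := lt_of_le_of_lt ht₀'Icc.2 ht₁.2
  have ht₀Ico : t₀' ∈ Ico 0 T := ⟨ht₀'Icc.1, ht₀T⟩
  have hu0le : u t₀' x₀' ≤ m := by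
    have hF : F (t₀', x₀') ≤ m := hFle
    have heq : F (t₀', x₀') = u t₀' x₀' := by
      rw [hFdef]; simp only; rw [hclamp_id t₀' ht₀'Icc.1 ht₀'Icc.2]
    rwa [heq] at hF
  have hBle : ∀ x, B ≤ u 0 x := by
    intro x
    apply csInf_le
    · exact ⟨0, fun v ⟨x', hx'⟩ => hx' ▸ (hupos 0 ⟨le_refl 0, hT⟩ x').le⟩
    · exact ⟨x, rfl⟩
  have ht₀pos : 0 < t₀' := by
    rcases ht₀'Icc.1.eq_or_lt with h | h
    · exfalso
      rw [← h] at hu0le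
      linarith [hBle x₀']
    · exact h
  have hcont0 : ContinuousOn (u t₀') K := (hu2 t₀' ht₀Ico).continuous.continuousOn
  obtain ⟨x₀, hx₀K, hx₀min⟩ := hK.exists_isMinOn ⟨x₀', hx₀'K⟩ hcont0
  set m₀ := u t₀' x₀ with hm₀def
  have hm₀m : m₀ ≤ m := le_trans (hx₀min hx₀'K) hu0le
  have hm₀pos : 0 < m₀ := hupos t₀' ht₀Ico x₀
  have hglobalmin : ∀ x, m₀ ≤ u t₀' x := by
    intro x
    obtain ⟨y, hyK, hy⟩ := hred (huper t₀' ht₀Ico) x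
    rw [← hy]
    exact hx₀min hyK
  have hclaim : ∀ t, 0 ≤ t → t < t₀' → ∀ x, m < u t x := by
    intro t ht0 htt₀ x
    by_contra hle
    push_neg at hle
    have htT : t < T := lt_of_lt_of_le htt₀ (le_of_lt ht₀T)
    obtain ⟨y, hyK, hy⟩ := hred (huper t ⟨ht0, htT⟩) x
    have hmemC : (t, y) ∈ C := by
      refine ⟨⟨⟨ht0, le_trans htt₀.le ht₀'Icc.2⟩, hyK⟩, ?_⟩
      show F (t, y) ≤ m
      have : F (t, y) = u t y := by
        rw [hFdef]; simp only
        rw [hclamp_id t ht0 (le_trans htt₀.le ht₀'Icc.2)]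
      rw [this, hy]
      exact hle
    have hle' : t₀' ≤ t := by
      rw [ht₀'eq]
      exact csInf_le hEcomp.bddBelow ⟨(t, y), hmemC, rfl⟩
    linarith
  -- bounds involving f and R₀
  have hSbdd : BddAbove (Set.range fun y => |f y|) := by
    have hperabs : IsPeriodic (fun y => |f y|) := fun x i => by
      simp only [hfper x i]
    have hsub : (Set.range fun y => |f y|) ⊆ (fun y => |f y|) '' K := by
      rintro _ ⟨x, rfl⟩
      obtain ⟨y, hyK, hy⟩ := hred hperabs x
      exact ⟨y, hyK, hy⟩
    exact ((hK.image hfsmooth.continuous.abs).bddAbove).mono hsub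
  have hfx : ∀ x, |f x| ≤ S := fun x => le_csSup hSbdd ⟨x, rfl⟩
  have hIle : ∀ x, I ≤ -R₀ x := by
    intro x
    have h : I ≤ |R₀ x| := csInf_le ⟨0, fun v ⟨x', hx'⟩ => hx' ▸ abs_nonneg _⟩ ⟨x, rfl⟩
    rwa [abs_of_neg (hR₀neg x)] at h
  have hInn : 0 ≤ I := Real.sInf_nonneg (fun v ⟨x, hx⟩ => hx ▸ abs_nonneg _)
  have hN1 : N - 1 = 4 / ((n:ℝ) - 2) := by
    rw [hN]; field_simp; norm_num
  have hN1pos : 0 < N - 1 := by rw [hN1]; positivity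
  have hNpos : 0 < N := by rw [hN]; apply div_pos <;> linarith
  have hp1 : (((n:ℝ) - 2)/4) * (N - 1) = 1 := by
    rw [hN1]; field_simp
  have hISnn : 0 ≤ I / S := div_nonneg hInn hfpos.le
  have step1 : m₀ ^ (N - 1) < I / S := by
    have h := Real.rpow_lt_rpow hm₀pos.le (lt_of_le_of_lt hm₀m hmA) hN1pos
    rw [hAdef, ← Real.rpow_mul hISnn, hp1, Real.rpow_one] at h
    exact h
  have step2 : m₀ ^ N = m₀ ^ (N - 1) * m₀ := by
    rw [← Real.rpow_add_one hm₀pos.ne' (N - 1), sub_add_cancel]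
  have key : S * m₀ ^ N < I * m₀ := by
    rw [step2]
    calc S * (m₀ ^ (N - 1) * m₀) < S * ((I / S) * m₀) :=
          mul_lt_mul_of_pos_left (mul_lt_mul_of_pos_right step1 hm₀pos) hfpos
      _ = I * m₀ := by field_simp
  have hlap : 0 ≤ lap (u t₀') x₀ := lap_nonneg_of_min (hu2 t₀' ht₀Ico) hglobalmin
  have hcnpos : 0 < cn := by rw [hcn]; apply div_pos <;> linarith
  have hD : 0 < ((n:ℝ) + 2) / 4 *
      (cn * lap (u t₀') x₀ - R₀ x₀ * u t₀' x₀ + f x₀ * u t₀' x₀ ^ N) := by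
    have h1 : I * m₀ ≤ -R₀ x₀ * m₀ := mul_le_mul_of_nonneg_right (hIle x₀) hm₀pos.le
    have h2 : -(S * m₀ ^ N) ≤ f x₀ * m₀ ^ N := by
      have hf1 := (abs_le.mp (hfx x₀)).1
      have hpow : 0 < m₀ ^ N := Real.rpow_pos_of_pos hm₀pos N
      have := mul_le_mul_of_nonneg_right hf1 hpow.le
      linarith [this]
    have h3 : 0 ≤ cn * lap (u t₀') x₀ := mul_nonneg hcnpos.le hlap
    have hfac : 0 < ((n:ℝ) + 2) / 4 := by linarith
    have hinner : 0 < cn * lap (u t₀') x₀ - R₀ x₀ * m₀ + f x₀ * m₀ ^ N := by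
      linarith [key, h1, h2, h3]
    exact mul_pos hfac hinner
  obtain ⟨t, htpos, htlt, hglt⟩ :=
    exists_lt_of_hasDerivAt_pos ht₀pos (hflow t₀' ht₀Ico x₀) hD
  have humt : m < u t x₀ := hclaim t htpos.le htlt x₀
  have hmono : u t₀' x₀ ^ N ≤ u t x₀ ^ N :=
    Real.rpow_le_rpow hm₀pos.le (le_trans hm₀m humt.le) hNpos.le
  linarith
end

section
/- Let (M, g₀) be a compact Riemannian manifold of dimension n ≥ 3 with smooth scalar-type functions R₀ < 0 and f. Let u, ū : [0, T) × M → (0, ∞) (with ū independent of t) be smooth with: u solving ∂_t(u^N) = ((n+2)/4)(c_n Δu − R₀ u + f u^N), ū satisfying −c_n Δū + R₀ ū − f ū^N ≥ 0, and u(0,·) ≤ ū. Then u(t,·) ≤ ū for all t ∈ [0,T). -/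
open Real Set Filter
open Topology

lemma isPeriodic_int {n : ℕ} {φ : EuclideanSpace ℝ (Fin n) → ℝ} (hφ : IsPeriodic φ)
    (x : EuclideanSpace ℝ (Fin n)) (i : Fin n) (m : ℤ) :
    φ (x + (m : ℝ) • EuclideanSpace.single i 1) = φ x := by
  induction m using Int.induction_on with
  | zero => simp
  | succ k ih =>
      push_cast
      push_cast at ih
      rw [show x + ((k : ℝ) + 1) • (EuclideanSpace.single i (1:ℝ))
          = (x + (k : ℝ) • EuclideanSpace.single i 1) + EuclideanSpace.single i 1 by module]
      rw [hφ]
      exact ih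
  | pred k ih =>
      push_cast
      push_cast at ih
      have := hφ (x + (-(k : ℝ) - 1) • (EuclideanSpace.single i (1:ℝ))) i
      rw [show (x + (-(k : ℝ) - 1) • (EuclideanSpace.single i (1:ℝ))) + EuclideanSpace.single i 1
          = x + (-(k:ℝ)) • EuclideanSpace.single i 1 by module] at this
      rw [← this, ← ih]

lemma isPeriodic_lattice {n : ℕ} {φ : EuclideanSpace ℝ (Fin n) → ℝ} (hφ : IsPeriodic φ)
    (x : EuclideanSpace ℝ (Fin n)) (k : Fin n → ℤ) :
    φ (x + ∑ j, (k j : ℝ) • EuclideanSpace.single j 1) = φ x := by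
  classical
  have H : ∀ s : Finset (Fin n),
      φ (x + ∑ j ∈ s, (k j : ℝ) • EuclideanSpace.single j 1) = φ x := by
    intro s
    induction s using Finset.induction with
    | empty => simp
    | insert _ _ h ih =>
        rename_i a s'
        rw [Finset.sum_insert h,
          show x + ((k a : ℝ) • EuclideanSpace.single a 1
              + ∑ j ∈ s', (k j : ℝ) • EuclideanSpace.single j 1)
            = (x + ∑ j ∈ s', (k j : ℝ) • EuclideanSpace.single j 1)
              + (k a : ℝ) • EuclideanSpace.single a 1 by module,
          isPeriodic_int hφ _ _ _, ih]
  exact H Finset.univ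

lemma coord_sum {n : ℕ} (c : Fin n → ℝ) (i : Fin n) :
    (∑ j, c j • EuclideanSpace.single j (1:ℝ) : EuclideanSpace ℝ (Fin n)) i = c i := by
  classical
  have : ∀ (s : Finset (Fin n)),
      ((∑ j ∈ s, c j • EuclideanSpace.single j (1:ℝ) : EuclideanSpace ℝ (Fin n)) i)
      = ∑ j ∈ s, c j * (if i = j then 1 else 0) := by
    intro s
    induction s using Finset.induction with
    | empty => simp [PiLp.zero_apply]
    | insert _ _ h ih =>
        rw [Finset.sum_insert h, Finset.sum_insert h, PiLp.add_apply, ih, PiLp.smul_apply,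
          EuclideanSpace.single_apply, smul_eq_mul]
  rw [this]
  simp

lemma reduce_to_ball {n : ℕ} (hn : 1 ≤ n) (x : EuclideanSpace ℝ (Fin n)) :
    ∃ y ∈ Metric.closedBall (0 : EuclideanSpace ℝ (Fin n)) n,
      ∀ φ : EuclideanSpace ℝ (Fin n) → ℝ, IsPeriodic φ → φ x = φ y := by
  classical
  set k : Fin n → ℤ := fun j => ⌊x j⌋ with hk
  set y : EuclideanSpace ℝ (Fin n) := x - ∑ j, (k j : ℝ) • EuclideanSpace.single j 1 with hy
  have hxy : x = y + ∑ j, (k j : ℝ) • EuclideanSpace.single j 1 := by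
    rw [hy]; abel
  have hyj : ∀ j, y j = x j - ⌊x j⌋ := by
    intro j
    rw [hy, PiLp.sub_apply, coord_sum]
  refine ⟨y, ?_, fun φ hφ => by rw [hxy, isPeriodic_lattice hφ]⟩
  rw [Metric.mem_closedBall, dist_zero_right, EuclideanSpace.norm_eq]
  have hbound : (∑ j, ‖y j‖ ^ 2) ≤ (n : ℝ) := by
    calc (∑ j : Fin n, ‖y j‖ ^ 2) ≤ ∑ _j : Fin n, (1:ℝ) := by
          refine Finset.sum_le_sum fun j _ => ?_
          have h1 : y j < 1 := by rw [hyj]; have := Int.lt_floor_add_one (x j); linarith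
          have h0 : 0 ≤ y j := by rw [hyj]; have := Int.floor_le (x j); linarith
          rw [Real.norm_eq_abs, abs_of_nonneg h0]
          nlinarith
      _ = (n : ℝ) := by simp
  calc √(∑ j, ‖y j‖ ^ 2) ≤ √ (n:ℝ) := Real.sqrt_le_sqrt hbound
    _ ≤ (n : ℝ) := by
        have h1 : (1:ℝ) ≤ n := Nat.one_le_cast.mpr hn
        calc √(n:ℝ) ≤ √((n:ℝ)^2) := Real.sqrt_le_sqrt (by nlinarith)
          _ = n := Real.sqrt_sq (by positivity)




variable {n : ℕ}

lemma diffAt_fderiv_apply {ψ : EuclideanSpace ℝ (Fin n) → ℝ} (hψ : ContDiff ℝ 2 ψ)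
    (v x : EuclideanSpace ℝ (Fin n)) :
    DifferentiableAt ℝ (fun y => fderiv ℝ ψ y v) x := by
  have h1 : Differentiable ℝ (fderiv ℝ ψ) :=
    (hψ.fderiv_right (m := 1) (by norm_num)).differentiable (by norm_num)
  exact ((ContinuousLinearMap.apply ℝ ℝ v).differentiable.comp h1).differentiableAt

lemma dir2_nonpos {ψ : EuclideanSpace ℝ (Fin n) → ℝ} (hψ : ContDiff ℝ 2 ψ)
    (x₀ v : EuclideanSpace ℝ (Fin n)) (hmax : ∀ x, ψ x ≤ ψ x₀) :
    fderiv ℝ (fun y => fderiv ℝ ψ y v) x₀ v ≤ 0 := by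
  set ℓ : ℝ → EuclideanSpace ℝ (Fin n) := fun s => x₀ + s • v with hℓdef
  have hℓ : ∀ s : ℝ, HasDerivAt ℓ v s := by
    intro s
    simpa [hℓdef] using ((hasDerivAt_id s).smul_const v).const_add x₀
  have hℓ0 : ℓ 0 = x₀ := by simp [hℓdef]
  set g : ℝ → ℝ := fun s => ψ (ℓ s) with hgdef
  set g₁ : ℝ → ℝ := fun s => fderiv ℝ ψ (ℓ s) v with hg1def
  have hg : ∀ s, HasDerivAt g (g₁ s) s := by
    intro s
    exact ((hψ.differentiable (by norm_num)).differentiableAt.hasFDerivAt).comp_hasDerivAt s (hℓ s)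
  set D := fderiv ℝ (fun y => fderiv ℝ ψ y v) x₀ v with hD
  have hg1 : HasDerivAt g₁ D 0 := by
    have h := (diffAt_fderiv_apply hψ v x₀).hasFDerivAt
    rw [← hℓ0] at h
    have h2 := h.comp_hasDerivAt 0 (hℓ 0)
    rw [hℓ0] at h2
    exact h2
  have hg10 : g₁ 0 = 0 := by
    have hloc : IsLocalMax g 0 := by
      apply Filter.Eventually.of_forall
      intro s
      simpa [hgdef, hℓ0] using hmax (ℓ s)
    exact hloc.hasDerivAt_eq_zero (hg 0)
  by_contra hpos
  push_neg at hpos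
  have hslope : Tendsto (slope g₁ 0) (nhdsWithin 0 (Ioi 0)) (nhds D) :=
    (hasDerivAt_iff_tendsto_slope.mp hg1).mono_left
      (nhdsWithin_mono 0 (fun s hs => ne_of_gt hs))
  have hev : ∀ᶠ s in nhdsWithin 0 (Ioi 0), 0 < g₁ s := by
    filter_upwards [hslope.eventually (eventually_gt_nhds hpos), self_mem_nhdsWithin]
      with s hs hs'
    have : slope g₁ 0 s = g₁ s / s := by
      simp [slope_def_field, hg10]
    rw [this] at hs
    have := mul_pos hs (show (0:ℝ) < s from hs')
    rwa [div_mul_cancel₀ _ (ne_of_gt hs')] at this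
  obtain ⟨δ, hδ, hsub⟩ := mem_nhdsGT_iff_exists_Ioo_subset.mp hev
  have hmono : StrictMonoOn g (Icc 0 δ) := by
    apply strictMonoOn_of_deriv_pos (convex_Icc 0 δ)
    · exact fun s _ => ((hg s).differentiableAt.continuousAt).continuousWithinAt
    · intro s hs
      rw [interior_Icc] at hs
      rw [(hg s).deriv]
      exact hsub ⟨hs.1, hs.2⟩
  have : g 0 < g δ := hmono ⟨le_rfl, le_of_lt hδ⟩ ⟨le_of_lt hδ, le_rfl⟩ hδ
  have : g δ ≤ g 0 := by simpa [hgdef, hℓ0] using hmax (ℓ δ)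
  linarith

lemma lap_le_of_max {a b : EuclideanSpace ℝ (Fin n) → ℝ}
    (ha : ContDiff ℝ 2 a) (hb : ContDiff ℝ 2 b) (x₀ : EuclideanSpace ℝ (Fin n))
    (hmax : ∀ x, a x - b x ≤ a x₀ - b x₀) : lap a x₀ ≤ lap b x₀ := by
  have key : ∀ v : EuclideanSpace ℝ (Fin n),
      fderiv ℝ (fun y => fderiv ℝ a y v) x₀ v ≤ fderiv ℝ (fun y => fderiv ℝ b y v) x₀ v := by
    intro v
    have hab : ContDiff ℝ 2 (fun x => a x - b x) := ha.sub hb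
    have h2 := dir2_nonpos hab x₀ v hmax
    have e1 : (fun y => fderiv ℝ (fun x => a x - b x) y v)
        = fun y => fderiv ℝ a y v - fderiv ℝ b y v := by
      funext y
      rw [fderiv_fun_sub ((ha.differentiable (by norm_num)).differentiableAt)
        ((hb.differentiable (by norm_num)).differentiableAt)]
      rfl
    rw [e1, fderiv_fun_sub (diffAt_fderiv_apply ha v x₀) (diffAt_fderiv_apply hb v x₀)] at h2
    simp only [ContinuousLinearMap.sub_apply] at h2
    linarith
  unfold lap
  exact Finset.sum_le_sum fun i _ => key _



lemma rpow_sub_le_mvt {N a b : ℝ} (hN : 1 ≤ N) (hb : 0 < b) (hba : b ≤ a) :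
    a ^ N - b ^ N ≤ N * a ^ (N - 1) * (a - b) := by
  rcases eq_or_lt_of_le hba with h | h
  · subst h; ring_nf; simp
  · obtain ⟨c, hc, hceq⟩ := exists_hasDerivAt_eq_slope (fun x => x ^ N)
      (fun x => N * x ^ (N - 1)) h
      (fun x hx => (Real.continuousAt_rpow_const x N
        (Or.inl (ne_of_gt (lt_of_lt_of_le hb hx.1)))).continuousWithinAt)
      (fun x hx => Real.hasDerivAt_rpow_const (Or.inl (ne_of_gt (lt_trans hb hx.1))))
    have hc0 : 0 < c := lt_trans hb hc.1
    have : a ^ N - b ^ N = N * c ^ (N - 1) * (a - b) := by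
      rw [hceq, div_mul_cancel₀ _ (by linarith : a - b ≠ 0)]
    rw [this]
    have hle : c ^ (N - 1) ≤ a ^ (N - 1) :=
      Real.rpow_le_rpow (le_of_lt hc0) (le_of_lt hc.2) (by linarith)
    have hab : 0 ≤ a - b := by linarith
    exact mul_le_mul_of_nonneg_right (mul_le_mul_of_nonneg_left hle (by linarith)) hab
lemma left_deriv_nonpos {χ : ℝ → ℝ} {t₀ d : ℝ} (ht₀ : 0 < t₀) (hd : HasDerivAt χ d t₀)
    (hpos : ∀ t ∈ Ico 0 t₀, 0 < χ t) (h0 : χ t₀ = 0) : d ≤ 0 := by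
  have hslope : Tendsto (slope χ t₀) (nhdsWithin t₀ (Iio t₀)) (nhds d) :=
    (hasDerivAt_iff_tendsto_slope.mp hd).mono_left
      (nhdsWithin_mono t₀ (fun s hs => ne_of_lt hs))
  have hev : ∀ᶠ t in nhdsWithin t₀ (Iio t₀), slope χ t₀ t ≤ 0 := by
    filter_upwards [Ioo_mem_nhdsLT_of_mem (⟨ht₀, le_rfl⟩ : t₀ ∈ Ioc 0 t₀)] with t ht
    have h1 : 0 < χ t := hpos t ⟨le_of_lt ht.1, ht.2⟩
    have h2 : t - t₀ < 0 := by linarith [ht.2]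
    rw [slope_def_field, h0, sub_zero]
    exact le_of_lt (div_neg_of_pos_of_neg h1 h2)
  exact le_of_tendsto hslope hev


set_option maxHeartbeats 2000000 in
/-- Comparison principle of Proposition 3.2: if `u` solves
`∂ₜ(u^N) = ((n+2)/4)(cₙΔu − R₀u + f u^N)`, `ū` is a (time-independent) supersolution
`−cₙΔū + R₀ū − fū^N ≥ 0`, and `u(0,·) ≤ ū`, then `u(t,·) ≤ ū` for all `t ∈ [0,T)`. -/
theorem stmt_8 {n : ℕ} (hn : 3 ≤ n) (T : ℝ) (hT : 0 < T)
    (u : ℝ → EuclideanSpace ℝ (Fin n) → ℝ)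
    (ubar R₀ f : EuclideanSpace ℝ (Fin n) → ℝ)
    (N cn : ℝ) (hN : N = ((n : ℝ) + 2) / ((n : ℝ) - 2))
    (hcn : cn = 4 * ((n : ℝ) - 1) / ((n : ℝ) - 2))
    (hR₀smooth : ContDiff ℝ (⊤ : ℕ∞) R₀) (hfsmooth : ContDiff ℝ (⊤ : ℕ∞) f)
    (hR₀per : IsPeriodic R₀) (hfper : IsPeriodic f)
    (hR₀neg : ∀ x, R₀ x < 0)
    (hupos : ∀ t ∈ Ico 0 T, ∀ x, 0 < u t x)
    (huper : ∀ t ∈ Ico 0 T, IsPeriodic (u t))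
    (hu2 : ∀ t ∈ Ico 0 T, ContDiff ℝ 2 (u t))
    (hucont : ContinuousOn (fun q : ℝ × EuclideanSpace ℝ (Fin n) => u q.1 q.2)
      (Ico 0 T ×ˢ univ))
    (hflow : ∀ t ∈ Ico 0 T, ∀ x,
      HasDerivAt (fun s => u s x ^ N)
        (((n : ℝ) + 2) / 4 * (cn * lap (u t) x - R₀ x * u t x + f x * u t x ^ N)) t)
    (hubar2 : ContDiff ℝ 2 ubar) (hubarper : IsPeriodic ubar)
    (hubarpos : ∀ x, 0 < ubar x)
    (hsuper : ∀ x, 0 ≤ -cn * lap ubar x + R₀ x * ubar x - f x * ubar x ^ N)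
    (hinit : ∀ x, u 0 x ≤ ubar x) :
    ∀ t ∈ Ico 0 T, ∀ x, u t x ≤ ubar x := by
  intro tstar htstar xstar
  obtain ⟨ht0, htT⟩ := htstar
  have hn2 : (2:ℝ) < (n:ℝ) := by
    have : (3:ℝ) ≤ (n:ℝ) := by exact_mod_cast hn
    linarith
  have hN1 : 1 < N := by
    rw [hN, lt_div_iff₀ (by linarith)]; linarith
  have hNpos : 0 < N := lt_trans one_pos hN1
  have hcnpos : 0 < cn := by
    rw [hcn]; apply div_pos <;> linarith
  have hN1' : (0:ℝ) ≤ N - 1 := by linarith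
  have hn1 : 1 ≤ n := by omega
  -- compact sets
  set Kc : Set (EuclideanSpace ℝ (Fin n)) := Metric.closedBall 0 n with hKcdef
  have hKc : IsCompact Kc := isCompact_closedBall _ _
  have hKne : Kc.Nonempty := ⟨0, by
    rw [hKcdef, Metric.mem_closedBall, dist_self]; positivity⟩
  set A : Set (ℝ × EuclideanSpace ℝ (Fin n)) := Icc 0 tstar ×ˢ Kc with hAdef
  have hA : IsCompact A := isCompact_Icc.prod hKc
  have hAne : A.Nonempty := ⟨(0, hKne.choose), ⟨⟨le_rfl, ht0⟩, hKne.choose_spec⟩⟩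
  have hAsub : A ⊆ Ico 0 T ×ˢ univ := fun p hp =>
    ⟨⟨hp.1.1, lt_of_le_of_lt hp.1.2 htT⟩, mem_univ _⟩
  have hucontA : ContinuousOn (fun q : ℝ × EuclideanSpace ℝ (Fin n) => u q.1 q.2) A :=
    hucont.mono hAsub
  -- bounds
  obtain ⟨pB, hpB, hBmax⟩ := hA.exists_isMaxOn hAne hucontA
  obtain ⟨B, hBdef⟩ : ∃ b : ℝ, b = u pB.1 pB.2 := ⟨_, rfl⟩
  have hB : ∀ p ∈ A, u p.1 p.2 ≤ B := fun p hp => hBdef ▸ isMaxOn_iff.mp hBmax p hp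
  have hBpos : 0 < B := hBdef ▸ hupos pB.1 (hAsub hpB).1 pB.2
  obtain ⟨xm, hxm, hmmin⟩ := hKc.exists_isMinOn hKne hubar2.continuous.continuousOn
  obtain ⟨m, hmdef⟩ : ∃ b : ℝ, b = ubar xm := ⟨_, rfl⟩
  have hm : ∀ x ∈ Kc, m ≤ ubar x := fun x hx => hmdef ▸ isMinOn_iff.mp hmmin x hx
  have hmpos : 0 < m := hmdef ▸ hubarpos xm
  obtain ⟨xR, hxR, hRmax⟩ := hKc.exists_isMaxOn hKne (hR₀smooth.continuous.neg.continuousOn)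
  obtain ⟨R, hRdef⟩ : ∃ b : ℝ, b = -R₀ xR := ⟨_, rfl⟩
  have hR : ∀ x ∈ Kc, -R₀ x ≤ R := fun x hx => hRdef ▸ isMaxOn_iff.mp hRmax x hx
  have hRpos : 0 < R := by rw [hRdef]; linarith [hR₀neg xR]
  obtain ⟨xF, hxF, hFmax⟩ := hKc.exists_isMaxOn hKne (hfsmooth.continuous.abs.continuousOn)
  obtain ⟨F, hFdef⟩ : ∃ b : ℝ, b = |f xF| := ⟨_, rfl⟩
  have hF : ∀ x ∈ Kc, |f x| ≤ F := fun x hx => hFdef ▸ isMaxOn_iff.mp hFmax x hx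
  have hF0 : (0:ℝ) ≤ F := hFdef ▸ abs_nonneg _
  have hBp0 : (0:ℝ) ≤ B ^ (N-1) := Real.rpow_nonneg hBpos.le _
  obtain ⟨C, hCdef⟩ : ∃ b : ℝ, b = ((n:ℝ)+2)/4 * (R + N * F * B ^ (N-1)) := ⟨_, rfl⟩
  have hCpos : 0 < C := by
    rw [hCdef]
    apply mul_pos (by linarith)
    have : 0 ≤ N * F * B ^ (N-1) := by positivity
    linarith
  obtain ⟨mp, hmpdef⟩ : ∃ b : ℝ, b = m ^ (N-1) := ⟨_, rfl⟩
  have hmppos : 0 < mp := hmpdef ▸ Real.rpow_pos_of_pos hmpos _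
  obtain ⟨K, hKdef⟩ : ∃ b : ℝ, b = C / (N * mp) + 1 := ⟨_, rfl⟩
  have hKpos : 0 < K := by rw [hKdef]; positivity
  -- main claim
  have claim : ∀ ε > 0, ∀ t ∈ Icc (0:ℝ) tstar, ∀ x, u t x < ubar x + ε * Real.exp (K * t) := by
    intro ε hε
    by_contra hcon
    push_neg at hcon
    obtain ⟨t₁, ht₁, x₁', hx₁'⟩ := hcon
    set S : Set ℝ :=
      {t | t ∈ Icc (0:ℝ) tstar ∧ ∃ x ∈ Kc, ubar x + ε * Real.exp (K*t) ≤ u t x} with hSdef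
    have hmemIcoT : ∀ t ∈ Icc (0:ℝ) tstar, t ∈ Ico 0 T :=
      fun t ht => ⟨ht.1, lt_of_le_of_lt ht.2 htT⟩
    have hSne : S.Nonempty := by
      obtain ⟨y, hy, hyeq⟩ := reduce_to_ball hn1 x₁'
      exact ⟨t₁, ht₁, y, hy, by
        rw [← hyeq ubar hubarper, ← hyeq (u t₁) (huper t₁ (hmemIcoT t₁ ht₁))]
        exact hx₁'⟩
    have hSbdd : BddBelow S := ⟨0, fun t ht => ht.1.1⟩
    obtain ⟨t₀, ht₀def⟩ : ∃ a : ℝ, a = sInf S := ⟨_, rfl⟩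
    have ht₀mem : t₀ ∈ Icc 0 tstar := by
      obtain ⟨ts, hts⟩ := hSne
      rw [ht₀def]
      exact ⟨le_csInf ⟨ts, hts⟩ (fun t ht => ht.1.1),
        le_trans (csInf_le hSbdd hts) hts.1.2⟩
    have ht₀T : t₀ ∈ Ico 0 T := hmemIcoT t₀ ht₀mem
    -- witness at t₀ via sequences
    have hseq : ∀ k : ℕ, ∃ s, s ∈ S ∧ s < t₀ + 1/(k+1) := by
      intro k
      have h1 : t₀ < t₀ + 1/(k+1) := by
        have : (0:ℝ) < 1/(k+1) := by positivity
        linarith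
      rw [ht₀def] at h1
      obtain ⟨a, ha, ha'⟩ := (csInf_lt_iff hSbdd hSne).mp h1
      rw [← ht₀def] at ha'
      exact ⟨a, ha, ha'⟩
    choose s hsS hslt using hseq
    have hsge : ∀ k, t₀ ≤ s k := fun k => by
      rw [ht₀def]; exact csInf_le hSbdd (hsS k)
    have hstend : Tendsto s atTop (𝓝 t₀) := by
      have h2 : Tendsto (fun k : ℕ => t₀ + 1/(k+1)) atTop (𝓝 (t₀ + 0)) :=
        tendsto_const_nhds.add tendsto_one_div_add_atTop_nhds_zero_nat
      rw [add_zero] at h2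
      exact tendsto_of_tendsto_of_tendsto_of_le_of_le tendsto_const_nhds h2
        hsge (fun k => (hslt k).le)
    choose xs hxsK hxsineq using fun k => (hsS k).2
    obtain ⟨x₁, hx₁K, φi, hφmono, hφtend⟩ := hKc.tendsto_subseq hxsK
    have hstendφ : Tendsto (fun j => s (φi j)) atTop (𝓝 t₀) :=
      hstend.comp hφmono.tendsto_atTop
    have hq : Tendsto (fun j => (s (φi j), xs (φi j))) atTop (𝓝 (t₀, x₁)) :=
      hstendφ.prodMk_nhds hφtend
    have hqA : ∀ j, (s (φi j), xs (φi j)) ∈ A :=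
      fun j => ⟨(hsS (φi j)).1, hxsK (φi j)⟩
    have hulim : Tendsto (fun j => u (s (φi j)) (xs (φi j))) atTop (𝓝 (u t₀ x₁)) := by
      have hcw : ContinuousWithinAt (fun q : ℝ × EuclideanSpace ℝ (Fin n) => u q.1 q.2)
          A (t₀, x₁) := hucontA _ ⟨ht₀mem, hx₁K⟩
      exact hcw.tendsto.comp
        (tendsto_nhdsWithin_of_tendsto_nhds_of_eventually_within _ hq
          (Eventually.of_forall hqA))
    have hlhs : Tendsto (fun j => ubar (xs (φi j)) + ε * Real.exp (K * s (φi j))) atTop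
        (𝓝 (ubar x₁ + ε * Real.exp (K * t₀))) := by
      apply Tendsto.add
      · exact (hubar2.continuous.tendsto x₁).comp hφtend
      · exact (tendsto_const_nhds.mul ((Real.continuous_exp.tendsto _).comp
          (tendsto_const_nhds.mul hstendφ)))
    have hx₁ineq : ubar x₁ + ε * Real.exp (K * t₀) ≤ u t₀ x₁ :=
      le_of_tendsto_of_tendsto' hlhs hulim (fun j => hxsineq (φi j))
    have ht₀pos : 0 < t₀ := by
      rcases lt_or_eq_of_le ht₀mem.1 with h | h
      · exact h
      · exfalso
        rw [← h] at hx₁ineq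
        rw [mul_zero, Real.exp_zero, mul_one] at hx₁ineq
        linarith only [hinit x₁, hx₁ineq, hε]
    have hbefore : ∀ t ∈ Ico (0:ℝ) t₀, ∀ x, u t x < ubar x + ε * Real.exp (K * t) := by
      intro t ht x
      by_contra hge
      push_neg at hge
      obtain ⟨y, hyK, hyeq⟩ := reduce_to_ball hn1 x
      have htIcc : t ∈ Icc (0:ℝ) tstar := ⟨ht.1, le_trans ht.2.le ht₀mem.2⟩
      have htS : t ∈ S := ⟨htIcc, y, hyK, by
        rw [← hyeq ubar hubarper, ← hyeq (u t) (huper t (hmemIcoT t htIcc))]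
        exact hge⟩
      have hle : t₀ ≤ t := by rw [ht₀def]; exact csInf_le hSbdd htS
      exact absurd hle (not_le.mpr ht.2)
    have hat : ∀ x, u t₀ x ≤ ubar x + ε * Real.exp (K * t₀) := by
      intro x
      have hcw2 : ContinuousWithinAt (fun t => u t x) (Ico 0 t₀) t₀ := by
        have h1 : ContinuousWithinAt (fun q : ℝ × EuclideanSpace ℝ (Fin n) => u q.1 q.2)
            (Ico 0 T ×ˢ univ) (t₀, x) := hucont _ ⟨ht₀T, mem_univ _⟩
        have h2 : ContinuousWithinAt (fun t : ℝ => ((t, x) : ℝ × EuclideanSpace ℝ (Fin n)))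
            (Ico 0 t₀) t₀ := (continuous_id.prodMk continuous_const).continuousWithinAt
        have h3 : ContinuousWithinAt
            ((fun q : ℝ × EuclideanSpace ℝ (Fin n) => u q.1 q.2) ∘ (fun t : ℝ => (t, x)))
            (Ico 0 t₀) t₀ :=
          ContinuousWithinAt.comp h1 h2 (fun t ht =>
            ⟨⟨ht.1, lt_trans ht.2 (lt_of_le_of_lt ht₀mem.2 htT)⟩, mem_univ _⟩)
        exact h3
      have hcw3 : ContinuousWithinAt
          (fun t => ubar x + ε * Real.exp (K * t) - u t x) (Ico 0 t₀) t₀ :=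
        (ContinuousWithinAt.sub (Continuous.continuousWithinAt
          (continuous_const.add (continuous_const.mul
            (Real.continuous_exp.comp (continuous_const.mul continuous_id))))) hcw2)
      have hne : (nhdsWithin t₀ (Ico 0 t₀)).NeBot := by
        apply mem_closure_iff_nhdsWithin_neBot.mp
        rw [closure_Ico (ne_of_gt ht₀pos).symm]
        exact ⟨le_of_lt ht₀pos, le_rfl⟩
      have hge : (0:ℝ) ≤ ubar x + ε * Real.exp (K * t₀) - u t₀ x := by
        refine ge_of_tendsto hcw3 ?_
        filter_upwards [self_mem_nhdsWithin] with t ht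
        have := hbefore t ht x
        linarith only [this]
      linarith only [hge]
    -- spatial maximizer at t₀
    have hcont_h : ContinuousOn (fun x => u t₀ x - ubar x) Kc :=
      (((hu2 t₀ ht₀T).continuous).sub hubar2.continuous).continuousOn
    obtain ⟨x₀, hx₀K, hx₀max'⟩ := hKc.exists_isMaxOn hKne hcont_h
    have hx₀max : ∀ y ∈ Kc, u t₀ y - ubar y ≤ u t₀ x₀ - ubar x₀ :=
      fun y hy => isMaxOn_iff.mp hx₀max' y hy
    obtain ⟨δ, hδdef⟩ : ∃ d : ℝ, d = ε * Real.exp (K * t₀) := ⟨_, rfl⟩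
    have hδpos : 0 < δ := by rw [hδdef]; positivity
    have heq : u t₀ x₀ = ubar x₀ + δ := by
      have h1 : δ ≤ u t₀ x₀ - ubar x₀ := by
        rw [hδdef]
        exact le_trans (by linarith only [hx₁ineq]) (hx₀max x₁ hx₁K)
      have h2 := hat x₀
      rw [← hδdef] at h2
      linarith only [h1, h2]
    have hgmax : ∀ x, u t₀ x - ubar x ≤ u t₀ x₀ - ubar x₀ := by
      intro x
      obtain ⟨y, hyK, hyeq⟩ := reduce_to_ball hn1 x
      rw [hyeq (u t₀) (huper t₀ ht₀T), hyeq ubar hubarper]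
      exact hx₀max y hyK
    have hlap : lap (u t₀) x₀ ≤ lap ubar x₀ := lap_le_of_max (hu2 t₀ ht₀T) hubar2 x₀ hgmax
    have hUpos : 0 < u t₀ x₀ := hupos t₀ ht₀T x₀
    have hUB : u t₀ x₀ ≤ B := hB (t₀, x₀) ⟨ht₀mem, hx₀K⟩
    have hmU : m ≤ u t₀ x₀ := by
      have := hm x₀ hx₀K
      rw [heq]
      linarith only [this, hδpos]
    -- time derivatives
    have hD₁ := hflow t₀ ht₀T x₀
    obtain ⟨D₂, hD₂def⟩ : ∃ d : ℝ, d = δ * K * N * u t₀ x₀ ^ (N-1) := ⟨_, rfl⟩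
    have hg2 : HasDerivAt (fun t => (ubar x₀ + ε * Real.exp (K * t)) ^ N) D₂ t₀ := by
      have h1 : HasDerivAt (fun t : ℝ => K * t) K t₀ := by
        simpa using (hasDerivAt_id t₀).const_mul K
      have h2 : HasDerivAt (fun t => Real.exp (K*t)) (Real.exp (K*t₀) * K) t₀ :=
        (Real.hasDerivAt_exp (K*t₀)).comp t₀ h1
      have h3 := (h2.const_mul ε).const_add (ubar x₀)
      have h4 := h3.rpow_const (Or.inr hN1.le)
      convert h4 using 1
      rw [hD₂def, heq, hδdef]
      ring
    have hχd : HasDerivAt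
        (fun t => (ubar x₀ + ε * Real.exp (K * t)) ^ N - u t x₀ ^ N)
        (D₂ - ((n:ℝ)+2)/4 * (cn * lap (u t₀) x₀ - R₀ x₀ * u t₀ x₀ + f x₀ * u t₀ x₀ ^ N)) t₀ :=
      hg2.sub hD₁
    have hχpos : ∀ t ∈ Ico (0:ℝ) t₀,
        0 < (ubar x₀ + ε * Real.exp (K * t)) ^ N - u t x₀ ^ N := by
      intro t ht
      have htT' : t ∈ Ico 0 T := ⟨ht.1, lt_trans ht.2 (lt_of_le_of_lt ht₀mem.2 htT)⟩
      have h1 : u t x₀ < ubar x₀ + ε * Real.exp (K*t) := hbefore t ht x₀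
      have h2 := Real.rpow_lt_rpow (le_of_lt (hupos t htT' x₀)) h1 hNpos
      linarith only [h2]
    have hχ0 : (ubar x₀ + ε * Real.exp (K * t₀)) ^ N - u t₀ x₀ ^ N = 0 := by
      rw [← hδdef, ← heq, sub_self]
    have hdle : D₂ - ((n:ℝ)+2)/4 * (cn * lap (u t₀) x₀ - R₀ x₀ * u t₀ x₀ + f x₀ * u t₀ x₀ ^ N)
        ≤ 0 := left_deriv_nonpos ht₀pos hχd hχpos hχ0
    -- estimates
    have hsup := hsuper x₀
    have hlap2 : cn * lap (u t₀) x₀ ≤ R₀ x₀ * ubar x₀ - f x₀ * ubar x₀ ^ N := by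
      have h1 : cn * lap (u t₀) x₀ ≤ cn * lap ubar x₀ :=
        mul_le_mul_of_nonneg_left hlap hcnpos.le
      linarith only [h1, hsup]
    have hP0 : 0 ≤ u t₀ x₀ ^ N - ubar x₀ ^ N := by
      have := Real.rpow_le_rpow (le_of_lt (hubarpos x₀))
        (show ubar x₀ ≤ u t₀ x₀ by linarith only [heq, hδpos]) (le_of_lt hNpos)
      linarith only [this]
    have hPle : u t₀ x₀ ^ N - ubar x₀ ^ N ≤ N * u t₀ x₀ ^ (N-1) * δ := by
      have h1 := rpow_sub_le_mvt hN1.le (hubarpos x₀)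
        (show ubar x₀ ≤ u t₀ x₀ by linarith only [heq, hδpos])
      rw [show u t₀ x₀ - ubar x₀ = δ by linarith only [heq]] at h1
      exact h1
    have hUBp : u t₀ x₀ ^ (N-1) ≤ B ^ (N-1) := Real.rpow_le_rpow hUpos.le hUB hN1'
    have hfP : f x₀ * (u t₀ x₀ ^ N - ubar x₀ ^ N) ≤ F * (N * B ^ (N-1) * δ) := by
      calc f x₀ * (u t₀ x₀ ^ N - ubar x₀ ^ N) ≤ F * (u t₀ x₀ ^ N - ubar x₀ ^ N) :=
            mul_le_mul_of_nonneg_right (le_trans (le_abs_self _) (hF x₀ hx₀K)) hP0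
        _ ≤ F * (N * u t₀ x₀ ^ (N-1) * δ) := mul_le_mul_of_nonneg_left hPle hF0
        _ ≤ F * (N * B ^ (N-1) * δ) := by
            apply mul_le_mul_of_nonneg_left _ hF0
            have := mul_le_mul_of_nonneg_right
              (mul_le_mul_of_nonneg_left hUBp hNpos.le) hδpos.le
            linarith only [this]
    have hRδ : (-R₀ x₀) * δ ≤ R * δ :=
      mul_le_mul_of_nonneg_right (hR x₀ hx₀K) hδpos.le
    have hD₁le : ((n:ℝ)+2)/4 * (cn * lap (u t₀) x₀ - R₀ x₀ * u t₀ x₀ + f x₀ * u t₀ x₀ ^ N)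
        ≤ C * δ := by
      have hinner : cn * lap (u t₀) x₀ - R₀ x₀ * u t₀ x₀ + f x₀ * u t₀ x₀ ^ N
          ≤ R * δ + F * (N * B ^ (N-1) * δ) := by
        have hrw : -(R₀ x₀ * u t₀ x₀) = -(R₀ x₀ * ubar x₀) + (-R₀ x₀) * δ := by
          rw [heq]; ring
        linarith only [hlap2, hrw, hfP, hRδ]
      calc ((n:ℝ)+2)/4 * (cn * lap (u t₀) x₀ - R₀ x₀ * u t₀ x₀ + f x₀ * u t₀ x₀ ^ N)
          ≤ ((n:ℝ)+2)/4 * (R * δ + F * (N * B ^ (N-1) * δ)) :=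
            mul_le_mul_of_nonneg_left hinner (by linarith)
        _ = C * δ := by rw [hCdef]; ring
    have hD₂ge : C * δ < D₂ := by
      rw [hD₂def]
      have hUmp : mp ≤ u t₀ x₀ ^ (N-1) := by
        rw [hmpdef]
        exact Real.rpow_le_rpow hmpos.le hmU hN1'
      have hKNmp : δ * K * N * mp ≤ δ * K * N * u t₀ x₀ ^ (N-1) :=
        mul_le_mul_of_nonneg_left hUmp (by positivity)
      have hNmp : N * mp ≠ 0 := by positivity
      have h2 : δ * K * N * mp = δ * (C + N * mp) := by
        rw [hKdef]
        field_simp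
      have h3 : 0 < δ * (N * mp) := mul_pos hδpos (mul_pos hNpos hmppos)
      have h4 : δ * (C + N * mp) = δ * C + δ * (N * mp) := by ring
      have h5 : C * δ = δ * C := mul_comm _ _
      linarith only [hKNmp, h2, h3, h4, h5]
    linarith only [hdle, hD₁le, hD₂ge]
  -- conclude
  by_contra hcon
  push_neg at hcon
  set ε := (u tstar xstar - ubar xstar) / Real.exp (K * tstar) with hεdef
  have hεpos : 0 < ε := div_pos (by linarith) (Real.exp_pos _)
  have h := claim ε hεpos tstar ⟨ht0, le_rfl⟩ xstar
  rw [hεdef, div_mul_cancel₀ _ (ne_of_gt (Real.exp_pos _))] at h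
  linarith only [h]
end
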